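/- (Proposition 1, second bound) There is an absolute constant K such that for all integers N ≥ 4, |G(N) − N²/2| ≤ K · ( |R₁(N)| + N·√(max_{0 ≤ u ≤ 3N/2} |R₁(u)|) ). -/

import Mathlib

noncomputable def Lam (n : ℕ) : ℝ := ArithmeticFunction.vonMangoldt n

/-- ψ₂(n) = Σ_{m+m'=n, m,m'≥1} Λ(m)Λ(m')  (terms with m = 0 vanish since Λ(0)=0). -/
noncomputable def psi2 (n : ℕ) : ℝ := ∑ m ∈ Finset.range n, Lam m * Lam (n - m)

/-- G(N) = Σ_{n ≤ N} ψ₂(n). -/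
noncomputable def G (N : ℕ) : ℝ := ∑ n ∈ Finset.Icc 1 N, psi2 n

/-- ψ(x) = Σ_{n ≤ x} Λ(n). -/
noncomputable def psi (x : ℝ) : ℝ := ∑ n ∈ Finset.Icc 1 ⌊x⌋₊, Lam n

/-- R(x) = ψ(x) − x. -/
noncomputable def RR (x : ℝ) : ℝ := psi x - x

/-- ψ₁(x) = Σ_{n ≤ x} (x − n)Λ(n). -/
noncomputable def psi1 (x : ℝ) : ℝ := ∑ n ∈ Finset.Icc 1 ⌊x⌋₊, (x - (n : ℝ)) * Lam n

/-- R₁(x) = ψ₁(x) − x²/2. -/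
noncomputable def R1 (x : ℝ) : ℝ := psi1 x - x ^ 2 / 2

/-- Λ₀(n) = Λ(n) − 1 for n ≥ 1, and 0 otherwise. -/
noncomputable def Lam0 (n : ℕ) : ℝ := if 1 ≤ n then Lam n - 1 else 0

/-- ψ₂⁰(n) = Σ_{m+m'=n, m,m'≥1} Λ₀(m)Λ₀(m')  (the m = 0 term vanishes since Λ₀(0)=0). -/
noncomputable def psi20 (n : ℕ) : ℝ := ∑ m ∈ Finset.range n, Lam0 m * Lam0 (n - m)

/-- Ψ(z) = Σ_{n ≥ 1} Λ(n) zⁿ. -/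
noncomputable def PsiC (z : ℂ) : ℂ := ∑' n : ℕ, (Lam n : ℂ) * z ^ n

/-- K_N(z) = Σ_{n=1}^{N} z^{−n}. -/
noncomputable def KN (N : ℕ) (z : ℂ) : ℂ := ∑ n ∈ Finset.Icc 1 N, z ^ (-(n : ℤ))

/-- ω(x) = inf_{u ≥ 1} (η(u)·log x + log u). -/
noncomputable def omegaFn (η : ℝ → ℝ) (x : ℝ) : ℝ :=
  sInf ((fun u => η u * Real.log x + Real.log u) '' Set.Ici 1)

/-- ϖ(x) = inf_{u ≥ 0} (η(u)·log x + u). -/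
noncomputable def varpi (η : ℝ → ℝ) (x : ℝ) : ℝ :=
  sInf ((fun u => η u * Real.log x + u) '' Set.Ici 0)

/-- F(N) = Σ_{n ≥ 1} ψ₂(n) e^{−n/N}  (the n = 0 term vanishes since ψ₂(0)=0). -/
noncomputable def Fav (N : ℕ) : ℝ := ∑' n : ℕ, psi2 n * Real.exp (-(n : ℝ) / N)


/-! Writing `Λ = 1 + Λ₀` on `[1, N]` and `ψ = id + R` in `G(N) = ∑_{m ≤ N} Λ(m) ψ(N - m)` gives
`G(N) - N²/2 = 2 R₁(N) + N/2 + ∑_{m ≤ N} Λ₀(m) R(N - m)`, since `∑_{k < N} R(k) = R₁(N) + N/2`.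
As `ψ` is nondecreasing, `R` drops by at most `L` over a window of length `L`, so comparing `R(k)`
with the sum of `R` over a window of length `L ≈ √S` ending or starting at `k` (a difference of two
values of `R₁`, hence at most `2S`) gives `|R(k)| ≪ √S`, where `S` bounds `|R₁|` on `[0, 3N/2]`.
Chebyshev's bound `ψ(N) ≪ N` then bounds the cross sum by `N √S`. -/

open Finset

lemma psi_eq_chebyshevPsi : psi = Chebyshev.psi := by
  ext x
  simp only [psi, Chebyshev.psi, Lam, ← Finset.Icc_add_one_left_eq_Ioc, zero_add]

lemma psi_nonneg (x : ℝ) : 0 ≤ psi x := psi_eq_chebyshevPsi ▸ Chebyshev.psi_nonneg x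

lemma monotone_psi : Monotone psi := psi_eq_chebyshevPsi ▸ Chebyshev.psi_mono

lemma psi_natCast_succ (k : ℕ) : psi (k + 1 : ℕ) = psi k + Lam (k + 1) := by
  simp only [psi, Nat.floor_natCast, sum_Icc_succ_top (Nat.le_add_left 1 k)]

lemma psi1_natCast_succ (k : ℕ) : psi1 (k + 1 : ℕ) = psi1 k + psi k := by
  simp only [psi1, psi, Nat.floor_natCast, sum_Icc_succ_top (Nat.le_add_left 1 k),
    sub_self, zero_mul, add_zero, ← sum_add_distrib]
  refine sum_congr rfl fun n _ => ?_
  push_cast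
  ring

lemma R1_natCast_succ (k : ℕ) : R1 (k + 1 : ℕ) = R1 k + RR k - 1 / 2 := by
  simp only [R1, RR, psi1_natCast_succ]
  push_cast
  ring

lemma sum_range_RR (N : ℕ) : ∑ k ∈ range N, RR k = R1 N + N / 2 := by
  induction N with
  | zero => simp [R1, psi1]
  | succ N ih =>
    rw [sum_range_succ, ih, R1_natCast_succ]
    push_cast
    ring

lemma sum_Ico_RR (k L : ℕ) : ∑ m ∈ Ico k (k + L), RR m = R1 (k + L : ℕ) - R1 k + L / 2 := by
  rw [sum_Ico_eq_sub _ (Nat.le_add_right k L), sum_range_RR, sum_range_RR]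
  push_cast
  ring

lemma sum_range_succ_eq_add_sum_Icc {M : Type*} [AddCommMonoid M] (f : ℕ → M) (N : ℕ) :
    ∑ m ∈ range (N + 1), f m = f 0 + ∑ m ∈ Icc 1 N, f m := by
  rw [range_eq_Ico, sum_eq_sum_Ico_succ_bot N.succ_pos, zero_add, Nat.succ_eq_add_one,
    Ico_add_one_right_eq_Icc]

lemma sum_range_psi2 (N : ℕ) :
    ∑ n ∈ range (N + 1), psi2 n = ∑ m ∈ range (N + 1), Lam m * psi (N - m : ℕ) := by
  induction N with
  | zero => simp [psi2, psi]
  | succ N ih =>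
    have hshift : ∀ m ∈ range (N + 1),
        Lam m * psi (N + 1 - m : ℕ) = Lam m * psi (N - m : ℕ) + Lam m * Lam (N + 1 - m) := by
      intro m hm
      rw [Nat.sub_add_comm (mem_range_succ_iff.1 hm), psi_natCast_succ, mul_add]
    rw [sum_range_succ, ih, sum_range_succ _ (N + 1), Nat.sub_self, sum_congr rfl hshift,
      sum_add_distrib, psi2]
    simp [psi]

lemma G_eq_sum_Lam_mul_psi (N : ℕ) : G N = ∑ m ∈ Icc 1 N, Lam m * psi (N - m : ℕ) := by
  have h := sum_range_psi2 N
  rw [sum_range_succ_eq_add_sum_Icc, sum_range_succ_eq_add_sum_Icc] at h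
  simpa [G, psi2, Lam] using h

noncomputable def crossSum (N : ℕ) : ℝ := ∑ m ∈ Icc 1 N, Lam0 m * RR (N - m : ℕ)

lemma sum_Icc_RR_sub (N : ℕ) : ∑ m ∈ Icc 1 N, RR (N - m : ℕ) = R1 N + N / 2 := by
  rw [← sum_range_RR]
  refine sum_nbij' (fun m => N - m) (fun k => N - k) ?_ ?_ ?_ ?_ (fun _ _ => rfl) <;>
    intro a ha <;> grind

lemma G_sub_sq_half_eq (N : ℕ) : G N - (N : ℝ) ^ 2 / 2 = 2 * R1 N + N / 2 + crossSum N := by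
  have hterm : ∀ m ∈ Icc 1 N, Lam m * psi (N - m : ℕ)
      = ((N : ℝ) - m) * Lam m + (RR (N - m : ℕ) + Lam0 m * RR (N - m : ℕ)) := by
    intro m hm
    obtain ⟨h1m, hmN⟩ := mem_Icc.1 hm
    rw [Lam0, if_pos h1m, RR, Nat.cast_sub hmN]
    ring
  have hpsi1 : psi1 N = ∑ m ∈ Icc 1 N, ((N : ℝ) - m) * Lam m := by
    rw [psi1, Nat.floor_natCast]
  rw [G_eq_sum_Lam_mul_psi, sum_congr rfl hterm, sum_add_distrib, sum_add_distrib, ← hpsi1,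
    sum_Icc_RR_sub, ← crossSum, R1]
  ring

lemma psi_le_seven_mul {x : ℝ} (hx : 0 ≤ x) : psi x ≤ 7 * x := by
  have hlog4 : Real.log 4 ≤ 3 := by linarith [Real.log_le_sub_one_of_pos (x := 4) (by norm_num)]
  rw [psi_eq_chebyshevPsi]
  nlinarith [Chebyshev.psi_le_const_mul_self hx]

lemma abs_RR_le_six_mul {x : ℝ} (hx : 0 ≤ x) : |RR x| ≤ 6 * x := by
  rw [RR, abs_le]
  constructor <;> linarith [psi_nonneg x, psi_le_seven_mul hx]

lemma abs_Lam0_le (m : ℕ) : |Lam0 m| ≤ Lam m + 1 := by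
  have hLam : 0 ≤ Lam m := ArithmeticFunction.vonMangoldt_nonneg
  unfold Lam0
  split_ifs
  · rw [abs_le]; constructor <;> linarith
  · rw [abs_zero]; linarith

lemma abs_crossSum_le {N : ℕ} {B : ℝ} (hB : ∀ k ≤ N, |RR k| ≤ B) :
    |crossSum N| ≤ 8 * N * B := by
  have hB0 : 0 ≤ B := (abs_nonneg _).trans (hB 0 N.zero_le)
  have hsum : ∑ m ∈ Icc 1 N, (Lam m + 1) = psi N + N := by
    simp [sum_add_distrib, psi]
  calc |crossSum N| ≤ ∑ m ∈ Icc 1 N, |Lam0 m| * |RR (N - m : ℕ)| := by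
        simpa only [crossSum, abs_mul] using
          abs_sum_le_sum_abs (fun m => Lam0 m * RR (N - m : ℕ)) (Icc 1 N)
    _ ≤ ∑ m ∈ Icc 1 N, (Lam m + 1) * B :=
        sum_le_sum fun m _ => mul_le_mul (abs_Lam0_le m) (hB _ (N.sub_le m)) (abs_nonneg _)
          (by linarith [abs_Lam0_le m, abs_nonneg (Lam0 m)])
    _ = (psi N + N) * B := by rw [← sum_mul, hsum]
    _ ≤ 8 * N * B := by nlinarith [psi_le_seven_mul N.cast_nonneg]

lemma mul_sub_le_sum_Ico {r : ℕ → ℝ} (hr : Monotone fun n => r n + n) (k L : ℕ) :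
    L * (r k - L) ≤ ∑ m ∈ Ico k (k + L), r m := by
  calc (L : ℝ) * (r k - L) = ∑ _m ∈ Ico k (k + L), (r k - L) := by
        rw [sum_const, Nat.card_Ico, Nat.add_sub_cancel_left, nsmul_eq_mul]
    _ ≤ ∑ m ∈ Ico k (k + L), r m := sum_le_sum fun m hm => by
        obtain ⟨hkm, hmL⟩ := mem_Ico.1 hm
        have hmL' : (m : ℝ) < k + L := by exact_mod_cast hmL
        linarith [hr hkm]

lemma sum_Ico_le_mul_add {r : ℕ → ℝ} (hr : Monotone fun n => r n + n) (k L : ℕ) :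
    ∑ m ∈ Ico k (k + L), r m ≤ L * (r (k + L) + L) := by
  calc ∑ m ∈ Ico k (k + L), r m ≤ ∑ _m ∈ Ico k (k + L), (r (k + L) + L) :=
        sum_le_sum fun m hm => by
          obtain ⟨hkm, hmL⟩ := mem_Ico.1 hm
          have hkm' : (k : ℝ) ≤ m := by exact_mod_cast hkm
          have := hr hmL.le
          push_cast at this
          linarith
    _ = L * (r (k + L) + L) := by
        rw [sum_const, Nat.card_Ico, Nat.add_sub_cancel_left, nsmul_eq_mul]

lemma monotone_RR_add_self : Monotone fun n : ℕ => RR n + n := by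
  simp only [RR, sub_add_cancel]
  exact monotone_psi.comp Nat.mono_cast

lemma mul_RR_sub_le {S : ℝ} (k L : ℕ) (hk : |R1 k| ≤ S) (hkL : |R1 (k + L : ℕ)| ≤ S) :
    L * (RR k - L) ≤ 2 * S + L / 2 := by
  have := mul_sub_le_sum_Ico monotone_RR_add_self k L
  rw [sum_Ico_RR] at this
  linarith [abs_le.1 hk, abs_le.1 hkL]

lemma mul_neg_RR_sub_le {S : ℝ} (k L : ℕ) (hk : |R1 k| ≤ S) (hkL : |R1 (k + L : ℕ)| ≤ S) :
    L * (-RR (k + L : ℕ) - L) ≤ 2 * S := by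
  have := sum_Ico_le_mul_add monotone_RR_add_self k L
  rw [sum_Ico_RR] at this
  push_cast at this hkL ⊢
  linarith [abs_le.1 hk, abs_le.1 hkL]

lemma le_seven_mul_of_mul_sub_le {x s L : ℝ} (hs : 0 < s) (hsL : s ≤ 2 * L) (hLs : L ≤ s)
    (h : L * (x - L) ≤ 3 * s ^ 2) : x ≤ 7 * s := by
  by_contra! hx
  nlinarith [mul_lt_mul_of_pos_left hx (by linarith : 0 < L)]

lemma abs_RR_le_of_abs_R1_le {N : ℕ} {S : ℝ} (hS1 : 1 ≤ S)
    (hS : ∀ u ∈ Set.Icc 0 (3 * (N : ℝ) / 2), |R1 u| ≤ S) {k : ℕ} (hk : k ≤ N) :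
    |RR k| ≤ 12 * √S := by
  set s := √S
  set L := ⌊s⌋₊
  have hs1 : 1 ≤ s := Real.one_le_sqrt.2 hS1
  have hLs : (L : ℝ) ≤ s := Nat.floor_le (by linarith)
  have hL1 : (1 : ℝ) ≤ L := by exact_mod_cast Nat.le_floor (by exact_mod_cast hs1)
  have hsL : s ≤ 2 * L := by linarith [Nat.lt_floor_add_one s]
  have hkN : (k : ℝ) ≤ N := by exact_mod_cast hk
  by_cases hLN : 2 * L ≤ N
  · have hLN' : 2 * (L : ℝ) ≤ N := by exact_mod_cast hLN
    have hR1 : ∀ j ≤ k + L, |R1 j| ≤ S := fun j hj =>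
      hS _ ⟨j.cast_nonneg, by linarith [(Nat.cast_le (α := ℝ)).2 hj, Nat.cast_add (R := ℝ) k L]⟩
    -- absorbs the `L / 2` of `mul_RR_sub_le` into `S`
    have hLS : (L : ℝ) ≤ s ^ 2 := by nlinarith
    have hsS : s ^ 2 = S := Real.sq_sqrt (by linarith)
    rw [abs_le]
    constructor
    · rcases lt_or_ge k L with hkL | hLk
      · have hkL' : (k : ℝ) < L := by exact_mod_cast hkL
        linarith [abs_le.1 (abs_RR_le_six_mul k.cast_nonneg)]
      · obtain ⟨j, rfl⟩ := Nat.exists_eq_add_of_le' hLk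
        have := mul_neg_RR_sub_le j L (hR1 j (by omega)) (hR1 (j + L) (by omega))
        linarith [le_seven_mul_of_mul_sub_le (x := -RR (j + L : ℕ)) (by linarith) hsL hLs
          (by nlinarith)]
    · have := mul_RR_sub_le k L (hR1 k (by omega)) (hR1 (k + L) le_rfl)
      linarith [le_seven_mul_of_mul_sub_le (x := RR k) (by linarith) hsL hLs (by nlinarith)]
  · have hNL : (N : ℝ) < 2 * L := by exact_mod_cast not_le.1 hLN
    linarith [abs_RR_le_six_mul k.cast_nonneg]

lemma psi1_nonneg {u : ℝ} (hu : 0 ≤ u) : 0 ≤ psi1 u :=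
  sum_nonneg fun _ hn => mul_nonneg
    (sub_nonneg.2 ((Nat.cast_le.2 (mem_Icc.1 hn).2).trans (Nat.floor_le hu)))
    ArithmeticFunction.vonMangoldt_nonneg

lemma psi1_le_mul_psi (u : ℝ) : psi1 u ≤ u * psi u := by
  rw [psi, mul_sum]
  exact sum_le_sum fun n _ => mul_le_mul_of_nonneg_right (by linarith [n.cast_nonneg (α := ℝ)])
    ArithmeticFunction.vonMangoldt_nonneg

lemma bddAbove_abs_R1_image (M : ℝ) : BddAbove ((fun u => |R1 u|) '' Set.Icc 0 M) := by
  refine ⟨M * psi M + M ^ 2 / 2, ?_⟩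
  rintro _ ⟨u, ⟨hu0, huM⟩, rfl⟩
  have hpsi : u * psi u ≤ M * psi M :=
    mul_le_mul huM (monotone_psi huM) (psi_nonneg u) (hu0.trans huM)
  have hsq : u ^ 2 ≤ M ^ 2 := pow_le_pow_left₀ hu0 huM 2
  change |R1 u| ≤ _
  rw [R1, abs_le]
  constructor <;> nlinarith [psi1_nonneg hu0, psi1_le_mul_psi u]

lemma R1_two : R1 2 = -2 := by
  have hfloor : ⌊(2 : ℝ)⌋₊ = 2 := by norm_num
  rw [R1, psi1, hfloor]
  norm_num [sum_Icc_succ_top, Lam]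

/-- Proposition 1, second bound:
|G(N) − N²/2| ≤ K·(|R₁(N)| + N·√(max_{0 ≤ u ≤ 3N/2} |R₁(u)|)) for N ≥ 4. -/
theorem stmt_3 : ∃ K : ℝ, ∀ N : ℕ, 4 ≤ N →
    |G N - (N : ℝ) ^ 2 / 2| ≤
      K * (|R1 (N : ℝ)| +
        (N : ℝ) * Real.sqrt (sSup ((fun u => |R1 u|) '' Set.Icc 0 (3 * (N : ℝ) / 2)))) := by
  refine ⟨100, fun N hN => ?_⟩
  set S := sSup ((fun u => |R1 u|) '' Set.Icc 0 (3 * (N : ℝ) / 2))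
  have hS : ∀ u ∈ Set.Icc 0 (3 * (N : ℝ) / 2), |R1 u| ≤ S := fun u hu =>
    le_csSup (bddAbove_abs_R1_image _) ⟨u, hu, rfl⟩
  have hN4 : (4 : ℝ) ≤ N := by exact_mod_cast hN
  -- `R₁(2) = -2` keeps `S` away from `0`
  have hS1 : 1 ≤ S := by
    have := hS 2 ⟨by norm_num, by linarith⟩
    rw [R1_two] at this
    norm_num at this
    linarith
  have hs1 : 1 ≤ √S := Real.one_le_sqrt.2 hS1
  have hcross := abs_crossSum_le fun k hk => abs_RR_le_of_abs_R1_le hS1 hS hk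
  rw [G_sub_sq_half_eq]
  calc |2 * R1 N + N / 2 + crossSum N| ≤ 2 * |R1 N| + N / 2 + |crossSum N| := by
        have := abs_add_three (2 * R1 N) (N / 2) (crossSum N)
        rwa [abs_mul, abs_two, abs_of_nonneg (by positivity : (0 : ℝ) ≤ N / 2)] at this
    _ ≤ 100 * (|R1 N| + N * √S) := by nlinarith [abs_nonneg (R1 N)]
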